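/- arXiv:1607.05718 — 2 statements merged into one kernel-verified Lean document; each statement's English description precedes it below -/
import Mathlib

section
/- For any prime p and positive integer h ≤ p-1, the maximum size of a subset A of Z/pZ such that 0 is not a sum of h distinct elements of A equals ⌊(p-2)/h⌋ + h. -/
/-!
Upper bound (Alon–Nathanson–Ruzsa): if `|A| > ⌊(p-2)/h⌋ + h`, pick exponents
`0 ≤ t₀ < ⋯ < t_{h-1} < |A|` with `∑ tᵢ = p - 1 + ∑ i`. The coefficient of `X^t` in
`f = ((∑ Xᵢ)^(p-1) - 1) · ∏_{i<j} (Xⱼ - Xᵢ)` is `(p-1)!/∏ tᵢ! · ∏_{i<j} (tⱼ - tᵢ)`, which is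
nonzero in `ZMod p`, and `X^t` has top degree. So by the Combinatorial Nullstellensatz `f` does
not vanish at some `x ∈ A^h`; by Fermat's little theorem the `xᵢ` are then distinct with sum `0`.

Lower bound: the progression `c, c + 1, …, c + m - 1` with `m = ⌊(p-2)/h⌋ + h` and
`h c + (0 + ⋯ + (h-1)) = 1` has all its `h`-fold restricted sums in
`{1, …, 1 + h(m - h)} ⊆ {1, …, p - 1}`.
-/

open Finset MvPolynomial Matrix Nat

theorem Finset.sum_range_card_le_sum (K : Finset ℕ) :
    ∑ i ∈ range #K, i ≤ ∑ k ∈ K, k := by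
  induction K using Finset.induction_on_max with
  | empty => simp
  | insert a s ha ih =>
    have has : a ∉ s := fun h => lt_irrefl a (ha a h)
    have hcard : #s ≤ a := by
      simpa using card_le_card (fun x hx => mem_range.mpr (ha x hx) : s ⊆ range a)
    rw [card_insert_of_notMem has, sum_range_succ, sum_insert has]
    omega

theorem Finset.sum_le_card_mul_add_sum_range {m : ℕ} {K : Finset ℕ} (hK : K ⊆ range m) :
    ∑ k ∈ K, k ≤ #K * (m - #K) + ∑ i ∈ range #K, i := by
  have hcompl := sum_range_card_le_sum (range m \ K)
  rw [card_sdiff_of_subset hK, card_range] at hcompl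
  have hsplit : ∑ k ∈ range m \ K, k + ∑ k ∈ K, k = ∑ i ∈ range m, i := sum_sdiff hK
  obtain ⟨d, rfl⟩ := Nat.exists_eq_add_of_le' (by simpa using card_le_card hK : #K ≤ m)
  have hrange :
      ∑ i ∈ range (d + #K), i = ∑ i ∈ range d, i + (#K * d + ∑ i ∈ range #K, i) := by
    rw [sum_range_add, sum_add_distrib, sum_const, card_range, smul_eq_mul, mul_comm]
  rw [Nat.add_sub_cancel] at hcompl ⊢
  omega

theorem Nat.sum_range_add_div (n : ℕ) {h : ℕ} (hh : 0 < h) :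
    ∑ i ∈ range h, (n + i) / h = n := by
  induction n with
  | zero => exact sum_eq_zero fun i hi => by simpa using Nat.div_eq_of_lt (mem_range.mp hi)
  | succ n ih =>
    -- shifting the window `n, …, n + h - 1` by one trades `n / h` for `(n + h) / h = n / h + 1`
    have hshift := sum_range_succ' (fun i => (n + i) / h) h
    rw [sum_range_succ, ih, Nat.add_div_right n hh, add_zero] at hshift
    simp only [add_right_comm n 1, add_assoc] at hshift ⊢
    omega

theorem Finsupp.prod_factorial_mul_multinomial_tsub {ι : Type*} [Fintype ι] {t d : ι →₀ ℕ}
    (hdt : d ≤ t) :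
    (∏ i, (t i)!) * (t - d).multinomial =
      (∑ i, (t i - d i))! * ∏ i, (t i).descFactorial (d i) := by
  rw [Finsupp.multinomial_eq_of_support_subset (subset_univ _)]
  simp_rw [← factorial_mul_descFactorial (hdt _), prod_mul_distrib]
  rw [mul_right_comm]
  simpa using
    congrArg (· * ∏ i, (t i).descFactorial (d i)) (Nat.multinomial_spec univ ⇑(t - d))

theorem Matrix.det_descFactorial_eq_det_vandermonde {R : Type*} [CommRing R] {n : ℕ}
    (t : Fin n → ℕ) :
    (Matrix.of fun i j : Fin n => ((t i).descFactorial j : R)).det =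
      (vandermonde fun i => (t i : R)).det := by
  have hℤ : (Matrix.of fun i j : Fin n => ((t i).descFactorial j : ℤ)).det =
      (vandermonde fun i => (t i : ℤ)).det := by
    rw [det_eval_matrixOfPolynomials_eq_det_vandermonde _ (fun j => descPochhammer ℤ j)
      (fun j => descPochhammer_natDegree ℤ j) (fun j => monic_descPochhammer ℤ j)]
    simp [descPochhammer_eval_eq_descFactorial]
  have := congrArg (Int.castRingHom R) hℤ
  rw [RingHom.map_det, RingHom.map_det] at this
  convert this using 2 <;> ext <;> simp [vandermonde]

namespace MvPolynomial

variable {R : Type*}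

theorem prod_factorial_mul_coeff_sum_X_pow_mul_monomial [CommSemiring R] {ι : Type*} [Fintype ι]
    (n : ℕ) {t d : ι →₀ ℕ} (h : ∑ i, t i = n + ∑ i, d i) :
    (∏ i, ((t i)! : R)) * coeff t ((∑ i, X i) ^ n * monomial d 1) =
      n ! * ∏ i, ((t i).descFactorial (d i) : R) := by
  rw [coeff_mul_monomial', mul_one]
  split_ifs with hdt
  · have hsub : ∑ i, (t i - d i) = n := by
      rw [sum_tsub_distrib _ (fun i _ => hdt i)]
      omega
    rw [coeff_sum_X_pow_of_fintype, if_pos]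
    · rw [← hsub]
      exact_mod_cast
        congrArg (Nat.cast : ℕ → R) (Finsupp.prod_factorial_mul_multinomial_tsub hdt)
    · rw [Finsupp.sum_fintype _ _ (fun _ => rfl)]
      simpa using hsub
  · obtain ⟨i, hi⟩ : ∃ i, t i < d i := by simpa [Finsupp.le_def] using hdt
    rw [mul_zero, prod_eq_zero (mem_univ i) (by simp [descFactorial_eq_zero_iff_lt.mpr hi]),
      mul_zero]

theorem prod_X_pow_comp_perm_eq_monomial [CommSemiring R] {n : ℕ} (σ : Equiv.Perm (Fin n)) :
    ∏ i, (X (σ i) : MvPolynomial (Fin n) R) ^ (i : ℕ) =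
      monomial (Finsupp.equivFunOnFinite.symm fun j => (σ⁻¹ j : ℕ)) 1 := by
  rw [monomial_eq, C_1, one_mul, Finsupp.prod_fintype _ _ (fun _ => pow_zero _),
    ← Equiv.prod_comp σ (fun j => X j ^ _)]
  simp

variable [CommRing R]

theorem prod_factorial_mul_coeff_sum_X_pow_mul_det_vandermonde {m : ℕ} (n : ℕ)
    {t : Fin m →₀ ℕ} (h : ∑ i, t i = n + ∑ i : Fin m, (i : ℕ)) :
    (∏ i, ((t i)! : R)) * coeff t ((∑ i, X i) ^ n * (vandermonde X).det) =
      n ! * (vandermonde fun i => (t i : R)).det := by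
  rw [← det_descFactorial_eq_det_vandermonde, det_apply, det_apply, mul_sum, coeff_sum, mul_sum,
    mul_sum]
  refine sum_congr rfl fun σ _ => ?_
  simp only [Units.smul_def, mul_smul_comm, coeff_smul, vandermonde_apply, of_apply,
    prod_X_pow_comp_perm_eq_monomial]
  rw [prod_factorial_mul_coeff_sum_X_pow_mul_monomial n (by simpa [Equiv.sum_comp] using h)]
  simp only [Finsupp.equivFunOnFinite_symm_apply_apply]
  rw [← Equiv.prod_comp σ]
  simp

theorem isHomogeneous_det_vandermonde_X (n : ℕ) :
    (vandermonde (X : Fin n → MvPolynomial (Fin n) R)).det.IsHomogeneous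
      (∑ i : Fin n, (i : ℕ)) := by
  rw [det_apply]
  refine IsHomogeneous.sum _ _ _ fun σ _ => ?_
  rw [Units.smul_def, ← mem_homogeneousSubmodule]
  exact zsmul_mem (IsHomogeneous.prod _ _ _ fun i _ => isHomogeneous_X_pow _ _) _

theorem eval_det_vandermonde_X {n : ℕ} (x : Fin n → R) :
    eval x (vandermonde X).det = (vandermonde x).det := by
  rw [RingHom.map_det]
  congr 1
  ext
  simp [vandermonde]

end MvPolynomial

namespace ZMod

variable {p : ℕ}

theorem natCast_injOn_range : Set.InjOn (Nat.cast : ℕ → ZMod p) (range p) := by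
  intro a ha b hb hab
  rwa [natCast_eq_natCast_iff', Nat.mod_eq_of_lt (mem_range.mp ha),
    Nat.mod_eq_of_lt (mem_range.mp hb)] at hab

variable [Fact p.Prime]

theorem coeff_sum_X_pow_mul_det_vandermonde_ne_zero {h : ℕ} {t : Fin h →₀ ℕ}
    (ht : StrictMono t) (htp : ∀ i, t i < p)
    (hsum : ∑ i, t i = p - 1 + ∑ i : Fin h, (i : ℕ)) :
    coeff t ((∑ i, X i) ^ (p - 1) *
      (vandermonde (X : Fin h → MvPolynomial (Fin h) (ZMod p))).det) ≠ 0 := by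
  have key := prod_factorial_mul_coeff_sum_X_pow_mul_det_vandermonde (R := ZMod p) (p - 1) hsum
  have hfact : ((p - 1)! : ZMod p) ≠ 0 := by
    have := (Fact.out : p.Prime).pos
    rw [Ne, natCast_eq_zero_iff, (Fact.out : p.Prime).dvd_factorial]
    omega
  have hinj : Function.Injective fun i => (t i : ZMod p) := fun i j hij =>
    ht.injective (natCast_injOn_range (mem_range.mpr (htp i)) (mem_range.mpr (htp j)) hij)
  intro hc
  rw [hc, mul_zero] at key
  exact mul_ne_zero hfact (det_vandermonde_ne_zero_iff.mpr hinj) key.symm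

theorem exists_subset_card_eq_sum_eq_zero {h : ℕ} (A : Finset (ZMod p)) (t : Fin h → ℕ)
    (ht : StrictMono t) (htA : ∀ i, t i < #A)
    (hsum : ∑ i, t i = p - 1 + ∑ i : Fin h, (i : ℕ)) :
    ∃ B ⊆ A, #B = h ∧ B.sum id = 0 := by
  have hp := (Fact.out : p.Prime).two_le
  set T : Fin h →₀ ℕ := Finsupp.equivFunOnFinite.symm t
  set L : MvPolynomial (Fin h) (ZMod p) := ∑ i, X i
  set V : MvPolynomial (Fin h) (ZMod p) := (vandermonde X).det
  have hV := isHomogeneous_det_vandermonde_X (R := ZMod p) h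
  have hLV : (L ^ (p - 1) * V).IsHomogeneous (p - 1 + ∑ i : Fin h, (i : ℕ)) := by
    simpa using ((IsHomogeneous.sum _ _ 1 fun i _ => isHomogeneous_X _ i).pow (p - 1)).mul hV
  have hT : T.degree = p - 1 + ∑ i : Fin h, (i : ℕ) := by
    simpa [Finsupp.degree_eq_sum, T] using hsum
  have hcoeff : coeff T ((L ^ (p - 1) - 1) * V) ≠ 0 := by
    rw [sub_mul, one_mul, coeff_sub, hV.coeff_eq_zero (by omega), sub_zero]
    refine coeff_sum_X_pow_mul_det_vandermonde_ne_zero (by simpa [T] using ht)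
      (fun i => (htA i).trans_le (card_le_univ A |>.trans_eq (card p))) (by simpa [T] using hsum)
  have hdeg : ((L ^ (p - 1) - 1) * V).totalDegree = T.degree := by
    refine le_antisymm ?_ ?_
    · rw [sub_mul, one_mul, hT]
      exact (totalDegree_sub _ _).trans
        (max_le hLV.totalDegree_le (hV.totalDegree_le.trans (by omega)))
    · have := le_totalDegree (mem_support_iff.mpr hcoeff)
      rwa [Finsupp.sum_fintype _ _ (fun _ => rfl), ← Finsupp.degree_eq_sum] at this
  obtain ⟨x, hxA, hx⟩ :=
    combinatorial_nullstellensatz_exists_eval_nonzero _ T hcoeff hdeg (fun _ => A) htA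
  obtain ⟨hsum_ne, hdet_ne⟩ :
      (∑ i, x i) ^ (p - 1) - 1 ≠ 0 ∧ (vandermonde x).det ≠ 0 := by
    simpa [L, V, eval_det_vandermonde_X] using hx
  have hx_inj : Function.Injective x := det_vandermonde_ne_zero_iff.mp hdet_ne
  refine ⟨univ.map ⟨x, hx_inj⟩, fun b hb => ?_, by simp, ?_⟩
  · obtain ⟨i, -, rfl⟩ := mem_map.mp hb
    exact hxA i
  · rw [sum_map]
    by_contra hne
    exact hsum_ne (sub_eq_zero.mpr (pow_card_sub_one_eq_one hne))

theorem exists_subset_card_eq_sum_eq_zero_of_lt_card {h : ℕ} (hh : 0 < h)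
    {A : Finset (ZMod p)} (hA : (p - 2) / h + h < #A) : ∃ B ⊆ A, #B = h ∧ B.sum id = 0 := by
  have hp := (Fact.out : p.Prime).two_le
  have hdiv : (p - 2 + h) / h = (p - 2) / h + 1 := Nat.add_div_right _ hh
  refine exists_subset_card_eq_sum_eq_zero A (fun i => i + (p - 1 + i) / h) ?_ ?_ ?_
  · intro i j hij
    have := Nat.div_le_div_right (c := h) (by omega : p - 1 + (i : ℕ) ≤ p - 1 + j)
    simp only [Fin.lt_def] at hij ⊢
    omega
  · intro i
    have := Nat.div_le_div_right (c := h) (by omega : p - 1 + (i : ℕ) ≤ p - 2 + h)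
    omega
  · rw [sum_add_distrib, Fin.sum_univ_eq_sum_range (fun i => (p - 1 + i) / h),
      sum_range_add_div _ hh, add_comm]

theorem exists_card_eq_not_exists_sum_eq_zero {h m : ℕ} (hh : 0 < h)
    (hhp : h < p) (hm : h * (m - h) ≤ p - 2) :
    ∃ A : Finset (ZMod p), #A = m ∧ ¬ ∃ B ⊆ A, #B = h ∧ B.sum id = 0 := by
  have hmp : m ≤ p := by
    rcases le_or_gt m h with hmh | hmh
    · omega
    · obtain ⟨d, rfl⟩ := Nat.exists_eq_add_of_lt hmh
      rw [show h + d + 1 - h = d + 1 by omega, mul_add_one] at hm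
      have := Nat.le_mul_of_pos_left d hh
      omega
  have hh0 : (h : ZMod p) ≠ 0 := by
    rw [Ne, natCast_eq_zero_iff]
    exact fun hd => (Nat.le_of_dvd hh hd).not_gt hhp
  set c : ZMod p := (h : ZMod p)⁻¹ * (1 - ∑ i ∈ range h, (i : ZMod p))
  set g : ℕ → ZMod p := fun k => c + k
  have hg : Set.InjOn g (range m) := fun a ha b hb hab =>
    natCast_injOn_range (range_subset_range.mpr hmp ha) (range_subset_range.mpr hmp hb)
      (add_left_cancel hab)
  refine ⟨(range m).image g, by rw [Finset.card_image_of_injOn hg, card_range], ?_⟩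
  rintro ⟨B, hBA, hBcard, hBsum⟩
  obtain ⟨K, hKm, rfl⟩ := subset_image_iff.mp hBA
  have hgK := hg.mono (coe_subset.mpr hKm)
  rw [Finset.card_image_of_injOn hgK] at hBcard
  have hlow := sum_range_card_le_sum K
  have hupp := sum_le_card_mul_add_sum_range hKm
  rw [hBcard] at hlow hupp
  have hsum :
      ∑ k ∈ K, g k = ((1 + (∑ k ∈ K, k - ∑ i ∈ range h, i) : ℕ) : ZMod p) := by
    simp only [g, c, sum_add_distrib, sum_const, hBcard, nsmul_eq_mul, mul_inv_cancel_left₀ hh0]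
    push_cast [Nat.cast_sub hlow]
    ring
  simp only [sum_image hgK, id, hsum, natCast_eq_zero_iff] at hBsum
  have := Nat.le_of_dvd (by omega) hBsum
  omega

end ZMod

theorem stmt1 (p h : ℕ) (hp : p.Prime) (h1 : 1 ≤ h) (h2 : h ≤ p - 1) :
    IsGreatest {m : ℕ | ∃ A : Finset (ZMod p), A.card = m ∧
      ¬ ∃ B ⊆ A, B.card = h ∧ B.sum id = (0 : ZMod p)} ((p - 2) / h + h) := by
  have : Fact p.Prime := ⟨hp⟩
  constructor
  · refine ZMod.exists_card_eq_not_exists_sum_eq_zero h1 (by omega) ?_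
    rw [Nat.add_sub_cancel, mul_comm]
    exact Nat.div_mul_le_self _ _
  · rintro m ⟨A, rfl, hA⟩
    by_contra! hlt
    exact hA (ZMod.exists_subset_card_eq_sum_eq_zero_of_lt_card h1 hlt)
end

section
/- Let G be a finite abelian group of order n that is not an elementary abelian 2-group, with subgroup of involutions of order l, and let m be a positive integer. Then G \ {0} contains an m-element subset summing to 0 if and only if: 2 ≤ m ≤ n-3, or (m = n-2 and l = 2), or (m = n-1 and l ≠ 2). -/
/-!
Let `H` be the subgroup of involutions and `K = G \ H`; `K` is nonempty, closed under negation,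
and `x ↦ -x` has no fixed point on it. Pairs `{x, -x} ⊆ K` give zero-sum sets of every even size
up to `|K|`; odd sizes come from a zero-sum triple (inside `H` if `|H| ≥ 4`, `{t, x, t - x}` if
`H = {0, t}`, `{x, y, -(x + y)}` if `H = 0`) padded with pairs that avoid it.

The pairs in `K` cancel, so `∑ G = ∑ H`, and pairing `H` by `x ↦ x + c` gives `∑ H = (|H| / 2) • c`
for each nonzero `c ∈ H`; hence `∑ G = 0` unless `|H| = 2`. This sum decides the sizes `|G| - 1`
and `|G| - 2`, and when it vanishes, complementation in `G \ {0}` trades size `m` for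
`|G| - 1 - m`, which reduces the construction to `2m < |G|`; there `|H| ≤ |K|` (translate `H` by
an element of `K`) leaves enough pairs.
-/

open Finset Fintype

theorem Finset.exists_disjoint_union_image_eq {α : Type*} [DecidableEq α] {g : α → α}
    (hg : Function.Involutive g) {s : Finset α} (hs : ∀ x ∈ s, g x ∈ s)
    (hfix : ∀ x ∈ s, g x ≠ x) : ∃ t, Disjoint t (t.image g) ∧ t ∪ t.image g = s := by
  classical
  -- from each orbit `{x, g x}` keep the element that is smaller for an arbitrary well-order
  refine ⟨s.filter fun x => WellOrderingRel x (g x), ?_, ?_⟩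
  · simp only [disjoint_left, mem_filter, mem_image, not_exists, not_and]
    rintro x ⟨-, hx⟩ y ⟨-, hy⟩ rfl
    rw [hg y] at hx
    exact asymm hx hy
  · ext x
    simp only [mem_union, mem_filter, mem_image]
    refine ⟨by rintro (⟨hx, -⟩ | ⟨y, ⟨hy, -⟩, rfl⟩); exacts [hx, hs y hy], fun hx => ?_⟩
    rcases trichotomous_of WellOrderingRel x (g x) with h | h | h
    · exact Or.inl ⟨hx, h⟩
    · exact absurd h.symm (hfix x hx)
    · exact Or.inr ⟨g x, ⟨hs x hx, by rwa [hg x]⟩, hg x⟩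

section

variable {G : Type*} [AddCommGroup G]

theorem exists_subset_card_eq_sum_eq_zero_of_neg_mem [DecidableEq G] {S : Finset G}
    (hS : ∀ x ∈ S, -x ∈ S) (hS2 : ∀ x ∈ S, x + x ≠ 0) {e : ℕ} (he : Even e) (heS : e ≤ #S) :
    ∃ B ⊆ S, #B = e ∧ ∑ x ∈ B, x = 0 := by
  obtain ⟨t, hdisj, hunion⟩ := exists_disjoint_union_image_eq neg_involutive hS
    fun x hx h => hS2 x hx (neg_eq_iff_add_eq_zero.mp h)
  have hcard : #S = 2 * #t := by
    rw [← hunion, card_union_of_disjoint hdisj, card_image_of_injective _ neg_injective, two_mul]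
  obtain ⟨Q, hQt, hQ⟩ := exists_subset_card_eq (show e / 2 ≤ #t by omega)
  have hQdisj : Disjoint Q (Q.image Neg.neg) := hdisj.mono hQt (image_subset_image hQt)
  refine ⟨Q ∪ Q.image Neg.neg, hunion ▸ union_subset_union hQt (image_subset_image hQt), ?_, ?_⟩
  · rw [card_union_of_disjoint hQdisj, card_image_of_injective _ neg_injective, hQ]
    obtain ⟨k, rfl⟩ := he
    omega
  · rw [sum_union hQdisj, sum_image neg_injective.injOn, sum_neg_distrib, add_neg_cancel]

def HasZeroSumSubset (G : Type*) [AddCommGroup G] (m : ℕ) : Prop :=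
  ∃ A : Finset G, (0 : G) ∉ A ∧ #A = m ∧ ∑ x ∈ A, x = 0

section TwoTorsion

variable [Fintype G] [DecidableEq G]

variable (G) in
def twoTorsion : Finset G := {g | g + g = 0}

@[simp]
theorem mem_twoTorsion {g : G} : g ∈ twoTorsion G ↔ g + g = 0 := by
  simp [twoTorsion]

theorem zero_mem_twoTorsion : (0 : G) ∈ twoTorsion G := by
  simp

theorem neg_mem_compl_twoTorsion {g : G} (hg : g ∈ (twoTorsion G)ᶜ) : -g ∈ (twoTorsion G)ᶜ := by
  simp only [mem_compl, mem_twoTorsion] at hg ⊢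
  grind

theorem card_filter_add_self_eq_le (c : G) : #{x | x + x = c} ≤ #(twoTorsion G) := by
  rcases (univ.filter fun x : G => x + x = c).eq_empty_or_nonempty with h | ⟨x₀, hx₀⟩
  · simp [h]
  refine card_le_card_of_injOn (· - x₀) (fun x hx => ?_) fun x _ y _ h => sub_left_injective h
  simp only [mem_coe, mem_filter, mem_univ, true_and, mem_twoTorsion] at hx hx₀ ⊢
  grind

theorem card_twoTorsion_le_card_compl {g : G} (hg : g + g ≠ 0) :
    #(twoTorsion G) ≤ #(twoTorsion G)ᶜ := by
  refine card_le_card_of_injOn (g + ·) (fun x hx => ?_) (add_right_injective g).injOn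
  simp only [mem_coe, mem_compl, mem_twoTorsion] at hx ⊢
  grind

theorem exists_twoTorsion_eq_pair (hl : #(twoTorsion G) = 2) :
    ∃ t, t ≠ 0 ∧ twoTorsion G = {0, t} := by
  obtain ⟨u, v, huv, huv'⟩ := card_eq_two.mp hl
  have h0 := huv' ▸ zero_mem_twoTorsion (G := G)
  rcases mem_insert.mp h0 with rfl | h0
  · exact ⟨v, huv.symm, huv'⟩
  · obtain rfl := mem_singleton.mp h0
    exact ⟨u, huv, huv'.trans (pair_comm _ _)⟩

theorem exists_pair_of_three_le_card_twoTorsion (hl : 3 ≤ #(twoTorsion G)) :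
    ∃ a b : G, a + a = 0 ∧ b + b = 0 ∧ a ≠ 0 ∧ b ≠ 0 ∧ a ≠ b := by
  obtain ⟨a, ha, b, hb, hab⟩ := one_lt_card.mp
    (show 1 < #((twoTorsion G).erase 0) by rw [card_erase_of_mem zero_mem_twoTorsion]; omega)
  simp only [mem_erase, mem_twoTorsion] at ha hb
  exact ⟨a, b, ha.2, hb.2, ha.1, hb.1, hab⟩

theorem sum_compl_twoTorsion : ∑ x ∈ (twoTorsion G)ᶜ, x = 0 :=
  sum_involution (fun x _ => -x) (fun x _ => add_neg_cancel x)
    (fun x hx _ h => by simp_all [neg_eq_iff_add_eq_zero])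
    (fun _ hx => neg_mem_compl_twoTorsion hx) (fun x _ => neg_neg x)

theorem sum_twoTorsion_eq_nsmul {a : G} (ha : a + a = 0) (ha0 : a ≠ 0) :
    ∑ x ∈ twoTorsion G, x = (#(twoTorsion G) / 2) • a := by
  have hinv : Function.Involutive (· + a) := fun x => by grind
  obtain ⟨t, hdisj, hunion⟩ := exists_disjoint_union_image_eq hinv (s := twoTorsion G)
    (fun x hx => by simp only [mem_twoTorsion] at hx ⊢; grind) (fun x _ => by simpa using ha0)
  have ht : ∀ x ∈ t, x + x = 0 := fun x hx => mem_twoTorsion.mp (hunion ▸ mem_union_left _ hx)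
  rw [← hunion, sum_union hdisj, sum_image (add_left_injective a).injOn, ← sum_add_distrib,
    card_union_of_disjoint hdisj, card_image_of_injective _ (add_left_injective a), ← two_mul,
    Nat.mul_div_cancel_left _ two_pos, ← sum_const]
  exact sum_congr rfl fun x hx => by grind [ht x hx]

theorem sum_twoTorsion_eq_zero (hl : #(twoTorsion G) ≠ 2) : ∑ x ∈ twoTorsion G, x = 0 := by
  have hl1 : 1 ≤ #(twoTorsion G) := card_pos.mpr ⟨0, zero_mem_twoTorsion⟩
  rcases (show #(twoTorsion G) = 1 ∨ 3 ≤ #(twoTorsion G) by omega) with hl | hl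
  · obtain ⟨w, hw⟩ := card_eq_one.mp hl
    have h0 := hw ▸ zero_mem_twoTorsion (G := G)
    rw [hw, sum_singleton, ← mem_singleton.mp h0]
  · obtain ⟨a, b, ha, hb, ha0, hb0, hab⟩ := exists_pair_of_three_le_card_twoTorsion hl
    have hab0 : a + b ≠ 0 := fun h => hab (by grind)
    -- the sum is `k • c` for every nonzero involution `c`, hence for `c = a`, `b` and `a + b`
    have h := sum_twoTorsion_eq_nsmul (G := G) (show a + b + (a + b) = 0 by grind) hab0
    rw [nsmul_add, ← sum_twoTorsion_eq_nsmul ha ha0, ← sum_twoTorsion_eq_nsmul hb hb0] at h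
    exact left_eq_add.mp h

theorem sum_univ_eq_zero_iff : ∑ x : G, x = 0 ↔ #(twoTorsion G) ≠ 2 := by
  rw [← sum_add_sum_compl (twoTorsion G), sum_compl_twoTorsion, add_zero]
  refine ⟨fun h hl => ?_, sum_twoTorsion_eq_zero⟩
  obtain ⟨t, ht0, ht⟩ := exists_twoTorsion_eq_pair hl
  rw [ht, sum_pair ht0.symm, zero_add] at h
  exact ht0 h

end TwoTorsion

theorem sum_univ_erase_zero [Fintype G] [DecidableEq G] : ∑ x ∈ univ.erase (0 : G), x = ∑ x, x :=
  sum_erase _ rfl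

namespace HasZeroSumSubset

variable {m : ℕ}

theorem ne_one (h : HasZeroSumSubset G m) : m ≠ 1 := by
  rintro rfl
  obtain ⟨A, hA0, hA, hsum⟩ := h
  obtain ⟨x, rfl⟩ := card_eq_one.mp hA
  rw [sum_singleton] at hsum
  exact hA0 (hsum ▸ mem_singleton_self x)

variable [Fintype G]

theorem le_card_sub_one (h : HasZeroSumSubset G m) : m ≤ card G - 1 := by
  classical
  obtain ⟨A, hA0, rfl, -⟩ := h
  simpa [card_erase_of_mem] using card_le_card (subset_erase.mpr ⟨subset_univ A, hA0⟩)

theorem compl (hσ : ∑ x : G, x = 0) (h : HasZeroSumSubset G m) :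
    HasZeroSumSubset G (card G - 1 - m) := by
  classical
  obtain ⟨A, hA0, rfl, hsum⟩ := h
  have hsub : A ⊆ univ.erase 0 := subset_erase.mpr ⟨subset_univ A, hA0⟩
  refine ⟨univ.erase 0 \ A, fun h => (mem_erase.mp (mem_sdiff.mp h).1).1 rfl, ?_, ?_⟩
  · rw [card_sdiff_of_subset hsub, card_erase_of_mem (mem_univ 0), card_univ]
  · rw [sum_sdiff_eq_sub hsub, sum_univ_erase_zero, hσ, hsum, sub_zero]

end HasZeroSumSubset

variable [Fintype G]

theorem hasZeroSumSubset_card_sub_one_iff :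
    HasZeroSumSubset G (card G - 1) ↔ ∑ x : G, x = 0 := by
  classical
  refine ⟨fun ⟨A, hA0, hA, hsum⟩ => ?_, fun hσ => ⟨univ.erase 0, notMem_erase 0 univ, ?_, ?_⟩⟩
  · rwa [eq_of_subset_of_card_le (subset_erase.mpr ⟨subset_univ A, hA0⟩)
      (by rw [hA, card_erase_of_mem (mem_univ 0), card_univ]), sum_univ_erase_zero] at hsum
  · rw [card_erase_of_mem (mem_univ 0), card_univ]
  · rwa [sum_univ_erase_zero]

theorem hasZeroSumSubset_card_sub_two_iff (hn : 2 ≤ card G) :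
    HasZeroSumSubset G (card G - 2) ↔ ∑ x : G, x ≠ 0 := by
  classical
  constructor
  · rintro ⟨A, hA0, hA, hsum⟩
    have hsub : A ⊆ univ.erase 0 := subset_erase.mpr ⟨subset_univ A, hA0⟩
    obtain ⟨u, hu⟩ := card_eq_one.mp (show #(univ.erase 0 \ A) = 1 by
      rw [card_sdiff_of_subset hsub, card_erase_of_mem (mem_univ 0), card_univ, hA]; omega)
    have hu0 : u ≠ 0 := (mem_erase.mp (mem_sdiff.mp (hu ▸ mem_singleton_self u)).1).1
    rwa [← sum_univ_erase_zero, ← sum_sdiff hsub, hu, sum_singleton, hsum,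
      add_zero]
  · intro hσ
    refine ⟨(univ.erase 0).erase (∑ x : G, x), by simp, ?_, ?_⟩
    · rw [card_erase_of_mem (by simpa using hσ), card_erase_of_mem (mem_univ 0), card_univ]
      omega
    · rw [sum_erase_eq_sub (by simpa using hσ), sum_univ_erase_zero, sub_self]

section Construction

variable [DecidableEq G] {m e : ℕ}

theorem hasZeroSumSubset_card_add {A R : Finset G} (hA0 : (0 : G) ∉ A)
    (hA : ∑ x ∈ A, x = 0) (hAR : ∀ x ∈ A, x + x ≠ 0 → x ∈ R) (hR : ∀ x ∈ R, -x ∈ R)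
    (he : Even e) (hle : e + #R ≤ #(twoTorsion G)ᶜ) : HasZeroSumSubset G (#A + e) := by
  obtain ⟨B, hBS, hB, hBsum⟩ := exists_subset_card_eq_sum_eq_zero_of_neg_mem
    (S := (twoTorsion G)ᶜ \ R)
    (fun x hx => by
      simp only [mem_sdiff] at hx ⊢
      exact ⟨neg_mem_compl_twoTorsion hx.1, fun h => hx.2 (neg_neg x ▸ hR _ h)⟩)
    (fun x hx => by simpa using (mem_sdiff.mp hx).1) he
    (by have := le_card_sdiff R (twoTorsion G)ᶜ; omega)
  have hdisj : Disjoint A B := disjoint_left.mpr fun x hxA hxB => by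
    have hx := mem_sdiff.mp (hBS hxB)
    exact hx.2 (hAR x hxA (by simpa using hx.1))
  refine ⟨A ∪ B, fun h => ?_, by rw [card_union_of_disjoint hdisj, hB], by
    rw [sum_union hdisj, hA, hBsum, add_zero]⟩
  rcases mem_union.mp h with h | h
  · exact hA0 h
  · simpa using (mem_sdiff.mp (hBS h)).1

theorem hasZeroSumSubset_of_even (he : Even e) (hle : e ≤ #(twoTorsion G)ᶜ) :
    HasZeroSumSubset G e := by
  simpa using hasZeroSumSubset_card_add (A := ∅) (R := ∅) (by simp) (by simp) (by simp) (by simp)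
    he (by simpa using hle)

theorem hasZeroSumSubset_three_add {x y z : G} {R : Finset G} (hx : x ≠ 0) (hy : y ≠ 0)
    (hz : z ≠ 0) (hxy : x ≠ y) (hxz : x ≠ z) (hyz : y ≠ z) (hsum : x + y + z = 0)
    (hR : ∀ w ∈ R, -w ∈ R) (hxyzR : ∀ w ∈ ({x, y, z} : Finset G), w + w ≠ 0 → w ∈ R)
    (he : Even e) (hle : e + #R ≤ #(twoTorsion G)ᶜ) : HasZeroSumSubset G (3 + e) := by
  have h := hasZeroSumSubset_card_add (by simp [hx.symm, hy.symm, hz.symm])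
    (by rw [sum_insert (by simp [hxy, hxz]), sum_pair hyz, ← add_assoc, hsum]) hxyzR hR he hle
  rwa [card_eq_three.mpr ⟨x, y, z, hxy, hxz, hyz, rfl⟩] at h

theorem hasZeroSumSubset_of_card_twoTorsion_eq_one (hl : #(twoTorsion G) = 1) (hm : Odd m)
    (hm3 : 3 ≤ m) (hmn : m + 4 ≤ card G) : HasZeroSumSubset G m := by
  have hK : #(twoTorsion G)ᶜ = card G - 1 := by rw [card_compl, hl]
  obtain ⟨x, -, hx⟩ := exists_mem_notMem_of_card_lt_card (s := ({0} : Finset G)) (t := univ)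
    (by rw [card_singleton, card_univ]; omega)
  rw [mem_singleton] at hx
  obtain ⟨y, -, hy⟩ := exists_mem_notMem_of_card_lt_card
    (s := {0, x, -x, -(x + x)} ∪ univ.filter fun y => y + y = -x) (t := univ) (by
      have := card_union_le {0, x, -x, -(x + x)} (univ.filter fun y : G => y + y = -x)
      have := card_le_four (a := 0) (b := x) (c := -x) (d := -(x + x))
      have := card_filter_add_self_eq_le (-x)
      rw [card_univ]; omega)
  simp only [mem_union, mem_insert, mem_singleton, mem_filter, mem_univ, true_and, not_or] at hy
  obtain ⟨⟨hy0, hyx, hynx, hy2x⟩, hyy⟩ := hy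
  have h := hasZeroSumSubset_three_add (z := -(x + y)) (R := {x, -x, y, -y, x + y, -(x + y)})
    (e := m - 3) hx hy0 (by grind) (Ne.symm hyx) (by grind) (by grind) (by abel)
    (by simp only [mem_insert, mem_singleton]; grind) (by simp) (by grind)
    (by have := card_le_six (a := x) (b := -x) (c := y) (d := -y) (e := x + y) (f := -(x + y))
        omega)
  rwa [show 3 + (m - 3) = m by omega] at h

theorem hasZeroSumSubset_of_twoTorsion_eq_pair {t : G} (ht0 : t ≠ 0) (ht : twoTorsion G = {0, t})
    (hm : Odd m) (hm3 : 3 ≤ m) (hmn : m + 3 ≤ card G) : HasZeroSumSubset G m := by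
  have hl : #(twoTorsion G) = 2 := by rw [ht, card_pair ht0.symm]
  have hK : #(twoTorsion G)ᶜ = card G - 2 := by rw [card_compl, hl]
  have ht2 : t + t = 0 := mem_twoTorsion.mp (ht ▸ mem_insert_of_mem (mem_singleton_self t))
  obtain ⟨x, hxK, hxt⟩ := exists_mem_notMem_of_card_lt_card
    (s := univ.filter fun x : G => x + x = t) (t := (twoTorsion G)ᶜ)
    (by have := card_filter_add_self_eq_le t; omega)
  simp only [mem_compl, mem_twoTorsion, mem_filter, mem_univ, true_and] at hxK hxt
  have h := hasZeroSumSubset_three_add (x := t) (y := x) (z := t - x) (R := {x, -x, t - x, x - t})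
    (e := m - 3) ht0 (by grind) (by grind) (by grind) (by grind)
    (fun h => hxt (eq_sub_iff_add_eq.mp h)) (by rw [add_add_sub_cancel, ht2])
    (by
      simp only [mem_insert, mem_singleton]
      rintro w (rfl | rfl | rfl | rfl) <;> simp [neg_sub])
    (by simp only [mem_insert, mem_singleton]; grind)
    (by grind) (by have := card_le_four (a := x) (b := -x) (c := t - x) (d := x - t); omega)
  rwa [show 3 + (m - 3) = m by omega] at h

theorem hasZeroSumSubset_of_three_le_card_twoTorsion (hl : 3 ≤ #(twoTorsion G)) (hm : Odd m)
    (hm3 : 3 ≤ m) (hmn : m ≤ #(twoTorsion G)ᶜ + 3) : HasZeroSumSubset G m := by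
  obtain ⟨a, b, ha, hb, ha0, hb0, hab⟩ := exists_pair_of_three_le_card_twoTorsion hl
  have h := hasZeroSumSubset_three_add (z := a + b) (R := ∅) (e := m - 3) ha0 hb0
    (fun h => hab (by grind)) hab (by grind) (by grind) (by grind) (by simp)
    (by simp only [mem_insert, mem_singleton]; grind) (by grind) (by simp; omega)
  rwa [show 3 + (m - 3) = m by omega] at h

theorem hasZeroSumSubset_of_two_le_of_le_card_sub_three {g : G} (hg : g + g ≠ 0) (hm : 2 ≤ m)
    (hmn : m ≤ card G - 3) : HasZeroSumSubset G m := by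
  have hsplit := card_add_card_compl (twoTorsion G)
  have hlK := card_twoTorsion_le_card_compl hg
  have hl0 : 0 < #(twoTorsion G) := card_pos.mpr ⟨0, zero_mem_twoTorsion⟩
  by_cases hl : #(twoTorsion G) = 2
  · obtain ⟨t, ht0, ht⟩ := exists_twoTorsion_eq_pair hl
    rcases Nat.even_or_odd m with he | ho
    · exact hasZeroSumSubset_of_even he (by omega)
    · exact hasZeroSumSubset_of_twoTorsion_eq_pair ht0 ht ho (by grind) (by omega)
  have hσ : ∑ x : G, x = 0 := sum_univ_eq_zero_iff.mpr hl
  wlog h2m : 2 * m ≤ card G - 1 generalizing m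
  · have h := (this (m := card G - 1 - m) (by omega) (by omega) (by omega)).compl hσ
    rwa [show card G - 1 - (card G - 1 - m) = m by omega] at h
  rcases Nat.even_or_odd m with he | ho
  · exact hasZeroSumSubset_of_even he (by omega)
  have hm3 : 3 ≤ m := by grind
  rcases (show #(twoTorsion G) = 1 ∨ 3 ≤ #(twoTorsion G) by omega) with hl1 | hl3
  · exact hasZeroSumSubset_of_card_twoTorsion_eq_one hl1 ho hm3 (by omega)
  · exact hasZeroSumSubset_of_three_le_card_twoTorsion hl3 ho hm3 (by omega)

end Construction

end

theorem stmt16 (G : Type*) [AddCommGroup G] [Fintype G]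
    (hG : ¬ ∀ g : G, g + g = 0) (m : ℕ) (hm : 1 ≤ m) :
    (∃ A : Finset G, (0 : G) ∉ A ∧ A.card = m ∧ A.sum id = 0) ↔
    ((2 ≤ m ∧ m ≤ Fintype.card G - 3) ∨
     (m = Fintype.card G - 2 ∧ Nat.card {g : G // g + g = 0} = 2) ∨
     (m = Fintype.card G - 1 ∧ Nat.card {g : G // g + g = 0} ≠ 2)) := by
  classical
  obtain ⟨g, hg⟩ := not_forall.mp hG
  have hl : Nat.card {g : G // g + g = 0} = #(twoTorsion G) := by
    rw [Nat.card_eq_fintype_card, Fintype.card_subtype, twoTorsion]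
  rw [hl]
  change HasZeroSumSubset G m ↔ _
  constructor
  · intro h
    have hne := h.ne_one
    have hle := h.le_card_sub_one
    rcases (show m ≤ card G - 3 ∨ m = card G - 2 ∨ m = card G - 1 by omega) with h3 | rfl | rfl
    · exact Or.inl ⟨by omega, h3⟩
    · exact Or.inr (Or.inl ⟨rfl, sum_univ_eq_zero_iff.not_left.mp
        ((hasZeroSumSubset_card_sub_two_iff (by omega)).mp h)⟩)
    · exact Or.inr (Or.inr ⟨rfl,
        sum_univ_eq_zero_iff.mp (hasZeroSumSubset_card_sub_one_iff.mp h)⟩)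
  · rintro (⟨h2, h3⟩ | ⟨rfl, hσ⟩ | ⟨rfl, hσ⟩)
    · exact hasZeroSumSubset_of_two_le_of_le_card_sub_three hg h2 h3
    · exact (hasZeroSumSubset_card_sub_two_iff (by omega)).mpr
        (sum_univ_eq_zero_iff.not_left.mpr hσ)
    · exact hasZeroSumSubset_card_sub_one_iff.mpr (sum_univ_eq_zero_iff.mpr hσ)
end
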